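/- arXiv:2203.09357 — 4 statements merged into one kernel-verified Lean document; each statement's English description precedes it below -/
import Mathlib

section
/- Let A be a self-adjoint operator on a finite-dimensional complex Hilbert space, g : ℝ → ℝ, and β an eigenvalue of g(A). The measurement-update maps T_{(β, g(A))} and T_{(g⁻¹(β), A)} agree on all density operators if and only if g⁻¹(β) ∩ σ(A) is a singleton. Here T_{(Δ,A)}(ρ) = (1/tr(ρ E_Δ)) Σ_{α∈Δ} E_α ρ E_α when tr(ρ E_Δ) ≠ 0 and 0 otherwise, with E_Δ = Σ_{α∈Δ∩σ(A)} E_α and E_α the eigenprojections of A, and T_{(β,g(A))} is the corresponding map for the operator g(A) with Δ = {β}. -/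
/-!
If two points `a ≠ b` of `σ(A)` have `g a = g b = β`, pick nonzero `x ∈ ran E a`, `y ∈ ran E b`
and let `ρ` be the pure state of `x + y`. The projection `Fβ` fixes `x + y`, so measuring `g(A)`
leaves `ρ` unchanged; measuring `A` instead replaces `ρ` by `∑ E α ρ E α`, which kills the
coherence `⟨x, ρ y⟩ = ‖x‖² ‖y‖² / ‖x + y‖² ≠ 0`. For a singleton fibre the two maps agree trivially.
-/

open Matrix
open scoped ComplexOrder
open scoped Classical

namespace Matrix

variable {𝕜 m ι : Type*} [RCLike 𝕜] [Fintype m]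

lemma exists_mulVec_ne_zero {M : Matrix m m 𝕜} (hM : M ≠ 0) : ∃ u, M *ᵥ u ≠ 0 := by
  by_contra! h
  exact hM (ext_iff_mulVec.2 fun u => by rw [h u, zero_mulVec])

lemma IsHermitian.star_dotProduct_mulVec {P : Matrix m m 𝕜} (hP : P.IsHermitian) (x y : m → 𝕜) :
    star x ⬝ᵥ (P *ᵥ y) = star (P *ᵥ x) ⬝ᵥ y := by
  rw [dotProduct_mulVec, star_mulVec, hP.eq]

lemma IsHermitian.star_dotProduct_mul_mul_mulVec {P Q : Matrix m m 𝕜} (hP : P.IsHermitian)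
    (M : Matrix m m 𝕜) (x y : m → 𝕜) :
    star x ⬝ᵥ ((P * M * Q) *ᵥ y) = star (P *ᵥ x) ⬝ᵥ (M *ᵥ (Q *ᵥ y)) := by
  rw [← mulVec_mulVec, ← mulVec_mulVec, hP.star_dotProduct_mulVec]

noncomputable def pureState (v : m → 𝕜) : Matrix m m 𝕜 :=
  (star v ⬝ᵥ v)⁻¹ • vecMulVec v (star v)

lemma posSemidef_pureState (v : m → 𝕜) : (pureState v).PosSemidef :=
  (posSemidef_vecMulVec_self_star v).smul (inv_nonneg.2 (dotProduct_star_self_nonneg v))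

lemma trace_pureState {v : m → 𝕜} (hv : v ≠ 0) : (pureState v).trace = 1 := by
  rw [pureState, trace_smul, trace_vecMulVec, dotProduct_comm v, smul_eq_mul,
    inv_mul_cancel₀ (dotProduct_star_self_eq_zero.not.2 hv)]

lemma mul_pureState {F : Matrix m m 𝕜} {v : m → 𝕜} (hFv : F *ᵥ v = v) :
    F * pureState v = pureState v := by
  rw [pureState, Matrix.mul_smul, mul_vecMulVec, hFv]

lemma pureState_mul {F : Matrix m m 𝕜} (hF : F.IsHermitian) {v : m → 𝕜} (hFv : F *ᵥ v = v) :
    pureState v * F = pureState v := by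
  rw [pureState, Matrix.smul_mul, vecMulVec_mul, ← hF.eq, ← star_mulVec, hFv]

lemma star_dotProduct_pureState_mulVec (v x y : m → 𝕜) :
    star x ⬝ᵥ (pureState v *ᵥ y) = (star v ⬝ᵥ v)⁻¹ * ((star x ⬝ᵥ v) * (star v ⬝ᵥ y)) := by
  rw [pureState, smul_mulVec, vecMulVec_mulVec, op_smul_eq_smul, dotProduct_smul,
    dotProduct_smul, smul_eq_mul, smul_eq_mul, mul_comm (star v ⬝ᵥ y)]

section OrthogonalProjections

variable {S : Finset ι} {E : ι → Matrix m m 𝕜}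

lemma mulVec_mulVec_of_orthogonal
    (horth : ∀ α ∈ S, ∀ α' ∈ S, E α * E α' = if α = α' then E α else 0)
    {a b : ι} (ha : a ∈ S) (hb : b ∈ S) (u : m → 𝕜) :
    E a *ᵥ (E b *ᵥ u) = if a = b then E b *ᵥ u else 0 := by
  rw [mulVec_mulVec, horth a ha b hb]
  split_ifs with hab
  · rw [hab]
  · exact zero_mulVec u

lemma sum_mulVec_of_orthogonal
    (horth : ∀ α ∈ S, ∀ α' ∈ S, E α * E α' = if α = α' then E α else 0)
    {b : ι} (hb : b ∈ S) (u : m → 𝕜) :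
    (∑ α ∈ S, E α) *ᵥ (E b *ᵥ u) = E b *ᵥ u := by
  rw [sum_mulVec, Finset.sum_congr rfl fun α hα => mulVec_mulVec_of_orthogonal horth hα hb u,
    Finset.sum_ite_eq', if_pos hb]

theorem exists_pureState_ne_sum_mul_pureState_mul
    (hE : ∀ α ∈ S, (E α).IsHermitian)
    (horth : ∀ α ∈ S, ∀ α' ∈ S, E α * E α' = if α = α' then E α else 0)
    {a b : ι} (ha : a ∈ S) (hb : b ∈ S) (hab : a ≠ b) (hEa : E a ≠ 0) (hEb : E b ≠ 0) :
    ∃ v : m → 𝕜, v ≠ 0 ∧ (∑ α ∈ S, E α) *ᵥ v = v ∧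
      ∑ α ∈ S, E α * pureState v * E α ≠ pureState v := by
  obtain ⟨u₁, hx⟩ := exists_mulVec_ne_zero hEa
  obtain ⟨u₂, hy⟩ := exists_mulVec_ne_zero hEb
  set x := E a *ᵥ u₁
  set y := E b *ᵥ u₂
  have hEx : ∀ α ∈ S, E α *ᵥ x = if α = a then x else 0 :=
    fun α hα => mulVec_mulVec_of_orthogonal horth hα ha u₁
  have hEy : ∀ α ∈ S, E α *ᵥ y = if α = b then y else 0 :=
    fun α hα => mulVec_mulVec_of_orthogonal horth hα hb u₂
  have hxy : star x ⬝ᵥ y = 0 := by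
    have hEby : E b *ᵥ y = y := by rw [hEy b hb, if_pos rfl]
    rw [← hEby, (hE b hb).star_dotProduct_mulVec, hEx b hb, if_neg hab.symm, star_zero,
      zero_dotProduct]
  have hxx : star x ⬝ᵥ x ≠ 0 := dotProduct_star_self_eq_zero.not.2 hx
  have hyy : star y ⬝ᵥ y ≠ 0 := dotProduct_star_self_eq_zero.not.2 hy
  have hxv : star x ⬝ᵥ (x + y) = star x ⬝ᵥ x := by rw [dotProduct_add, hxy, add_zero]
  have hvy : star (x + y) ⬝ᵥ y = star y ⬝ᵥ y := by rw [star_add, add_dotProduct, hxy, zero_add]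
  have hv : x + y ≠ 0 := fun hv => hxx (by rw [← hxv, hv, dotProduct_zero])
  refine ⟨x + y, hv, ?_, fun h => ?_⟩
  · rw [mulVec_add, sum_mulVec_of_orthogonal horth ha, sum_mulVec_of_orthogonal horth hb]
  have hmeasured : star x ⬝ᵥ ((∑ α ∈ S, E α * pureState (x + y) * E α) *ᵥ y) = 0 := by
    rw [sum_mulVec, dotProduct_sum]
    refine Finset.sum_eq_zero fun α hα => ?_
    rw [(hE α hα).star_dotProduct_mul_mul_mulVec, hEx α hα, hEy α hα]
    by_cases hαa : α = a
    · subst hαa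
      rw [if_neg hab, mulVec_zero, dotProduct_zero]
    · rw [if_neg hαa, star_zero, zero_dotProduct]
  have hcoherent : star x ⬝ᵥ (pureState (x + y) *ᵥ y) ≠ 0 := by
    rw [star_dotProduct_pureState_mulVec, hxv, hvy]
    exact mul_ne_zero (inv_ne_zero (dotProduct_star_self_eq_zero.not.2 hv)) (mul_ne_zero hxx hyy)
  exact hcoherent (h ▸ hmeasured)

end OrthogonalProjections

end Matrix

theorem stmt8_general {n : ℕ}
    (σA : Finset ℝ) (E : ℝ → Matrix (Fin n) (Fin n) ℂ)
    (hEherm : ∀ α ∈ σA, (E α).IsHermitian)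
    (hEorth : ∀ α ∈ σA, ∀ α' ∈ σA, E α * E α' = if α = α' then E α else 0)
    (hE0 : ∀ α ∈ σA, E α ≠ 0)
    (g : ℝ → ℝ) (β : ℝ) (hβ : β ∈ σA.image g)
    (Fβ : Matrix (Fin n) (Fin n) ℂ)
    (hFβ : Fβ = ∑ α ∈ σA.filter (fun α => g α = β), E α) :
    (∀ ρ : Matrix (Fin n) (Fin n) ℂ, ρ.PosSemidef → ρ.trace = 1 →
      (if (ρ * Fβ).trace = 0 then 0 else (ρ * Fβ).trace⁻¹ • (Fβ * ρ * Fβ)) =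
      (if (ρ * Fβ).trace = 0 then 0 else
        (ρ * Fβ).trace⁻¹ • ∑ α ∈ σA.filter (fun α => g α = β), E α * ρ * E α))
    ↔ (σA.filter (fun α => g α = β)).card = 1 := by
  set S := σA.filter (fun α => g α = β)
  have hSσ : ∀ α ∈ S, α ∈ σA := fun α hα => (Finset.mem_filter.1 hα).1
  constructor
  · intro hT
    by_contra hcard
    have hS : S.Nonempty := by
      obtain ⟨α, hα, hgα⟩ := Finset.mem_image.1 hβ
      exact ⟨α, Finset.mem_filter.2 ⟨hα, hgα⟩⟩
    obtain ⟨a, ha, b, hb, hab⟩ :=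
      Finset.one_lt_card.1 (lt_of_le_of_ne hS.card_pos (Ne.symm hcard))
    obtain ⟨v, hv, hFv, hne⟩ := exists_pureState_ne_sum_mul_pureState_mul
      (fun α hα => hEherm α (hSσ α hα))
      (fun α hα α' hα' => hEorth α (hSσ α hα) α' (hSσ α' hα'))
      ha hb hab (hE0 a (hSσ a ha)) (hE0 b (hSσ b hb))
    rw [← hFβ] at hFv
    have hF : Fβ.IsHermitian := hFβ ▸ isSelfAdjoint_sum S fun α hα => hEherm α (hSσ α hα)
    have hρF : pureState v * Fβ = pureState v := pureState_mul hF hFv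
    have hT_v := hT (pureState v) (posSemidef_pureState v) (trace_pureState hv)
    rw [hρF, trace_pureState hv, if_neg one_ne_zero, if_neg one_ne_zero, inv_one, one_smul,
      one_smul, mul_pureState hFv, hρF] at hT_v
    exact hne hT_v.symm
  · intro hcard ρ _ _
    obtain ⟨a, ha⟩ := Finset.card_eq_one.1 hcard
    simp only [hFβ, ha, Finset.sum_singleton]

/-- Let `A = ∑ α ∈ σA, α • E α` be the spectral decomposition of the
self-adjoint `A` (nonzero orthogonal eigenprojections summing to `1`), let
`g : ℝ → ℝ` and let `β` be an eigenvalue of `g(A)`, i.e. `β ∈ g '' σA`, with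
eigenprojection `Fβ = ∑_{α ∈ σA, g α = β} E α`. The measurement-update maps
`T_{(β, g(A))}` and `T_{(g⁻¹(β), A)}` agree on all density operators iff
`g⁻¹(β) ∩ σ(A)` is a singleton. -/
theorem stmt8 {n : ℕ} (hn : 0 < n)
    (A : Matrix (Fin n) (Fin n) ℂ) (hA : A.IsHermitian)
    (σA : Finset ℝ) (E : ℝ → Matrix (Fin n) (Fin n) ℂ)
    (hEherm : ∀ α ∈ σA, (E α).IsHermitian)
    (hEorth : ∀ α ∈ σA, ∀ α' ∈ σA, E α * E α' = if α = α' then E α else 0)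
    (hEsum : ∑ α ∈ σA, E α = 1)
    (hE0 : ∀ α ∈ σA, E α ≠ 0)
    (hAdec : A = ∑ α ∈ σA, (α : ℂ) • E α)
    (g : ℝ → ℝ) (β : ℝ) (hβ : β ∈ σA.image g)
    (Fβ : Matrix (Fin n) (Fin n) ℂ)
    (hFβ : Fβ = ∑ α ∈ σA.filter (fun α => g α = β), E α) :
    (∀ ρ : Matrix (Fin n) (Fin n) ℂ, ρ.PosSemidef → ρ.trace = 1 →
      (if (ρ * Fβ).trace = 0 then 0 else (ρ * Fβ).trace⁻¹ • (Fβ * ρ * Fβ)) =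
      (if (ρ * Fβ).trace = 0 then 0 else
        (ρ * Fβ).trace⁻¹ • ∑ α ∈ σA.filter (fun α => g α = β), E α * ρ * E α))
    ↔ (σA.filter (fun α => g α = β)).card = 1 :=
  stmt8_general σA E hEherm hEorth hE0 g β hβ Fβ hFβ
end

section
/- Let A be a self-adjoint operator on a finite-dimensional complex Hilbert space with eigenprojections {E_α}, let Δ ⊆ σ(A) contain two distinct eigenvalues α₀ ≠ α₁, and suppose g : ℝ → ℝ is constant on Δ with value β and g⁻¹(β) ∩ σ(A) = Δ. Let φ₀, φ₁ be unit eigenvectors for α₀, α₁ and ψ = (φ₀+φ₁)/√2. Then ψ is an eigenvector of g(A) with eigenvalue β, the update T_{(β,g(A))}(|ψ⟩⟨ψ|) = |ψ⟩⟨ψ|, while T_{(Δ,A)}(|ψ⟩⟨ψ|) = (1/2)(|φ₀⟩⟨φ₀| + |φ₁⟩⟨φ₁|) ≠ |ψ⟩⟨ψ|. -/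
/-! The eigenvectors `φ₀, φ₁` lie in the ranges of the orthogonal projections `E α₀, E α₁`, so
they are orthonormal, `ψ` is a unit vector, and `ψ` lies in the range of `E_Δ = ∑ α ∈ Δ, E α`,
on which `g(A)` acts as `β`. Compressing `|ψ⟩⟨ψ|` by `E_Δ` therefore changes nothing, whereas
compressing it by each `E α` separately turns `|ψ⟩⟨ψ|` into `∑ α, |E α ψ⟩⟨E α ψ|`, which drops
the cross terms `|φ₀⟩⟨φ₁|` and `|φ₁⟩⟨φ₀|`. The resulting mixture is not `|ψ⟩⟨ψ|`: it maps
`φ₁` to `φ₁ / 2`, while `|ψ⟩⟨ψ|` maps it to `(φ₀ + φ₁) / 2`. -/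

open Matrix

theorem Matrix.mul_vecMulVec_star_mul_conjTranspose {l m α : Type*} [Fintype m]
    [NonUnitalSemiring α] [StarRing α] (M : Matrix l m α) (v : m → α) :
    M * vecMulVec v (star v) * Mᴴ = vecMulVec (M *ᵥ v) (star (M *ᵥ v)) := by
  rw [mul_vecMulVec, vecMulVec_mul, vecMul_conjTranspose, star_star]

theorem Matrix.vecMulVec_smul_star_smul {m α : Type*} [CommSemiring α] [StarRing α] (c : α)
    (v : m → α) : vecMulVec (c • v) (star (c • v)) = (c * star c) • vecMulVec v (star v) := by
  rw [star_smul, smul_vecMulVec, vecMulVec_smul, smul_smul]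

theorem Matrix.vecMulVec_star_mul_of_mulVec_eq_self {m α : Type*} [Fintype m]
    [NonUnitalSemiring α] [StarRing α] {F : Matrix m m α} (hF : F.IsHermitian) {v : m → α}
    (hv : F *ᵥ v = v) : vecMulVec v (star v) * F = vecMulVec v (star v) := by
  rw [vecMulVec_mul, ← hF.eq, ← star_mulVec, hv]

structure IsSpectralResolution {m : Type*} [Fintype m] [DecidableEq m]
    (A : Matrix m m ℂ) (σ : Finset ℝ) (E : ℝ → Matrix m m ℂ) : Prop where
  mul_eq : ∀ α ∈ σ, ∀ α' ∈ σ, E α * E α' = if α = α' then E α else 0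
  sum_eq_one : ∑ α ∈ σ, E α = 1
  eq_sum : A = ∑ α ∈ σ, (α : ℂ) • E α

namespace IsSpectralResolution

variable {m : Type*} [Fintype m] [DecidableEq m] {A : Matrix m m ℂ} {σ : Finset ℝ}
  {E : ℝ → Matrix m m ℂ}

theorem mul_eq_smul (h : IsSpectralResolution A σ E) {α : ℝ} (hα : α ∈ σ) :
    E α * A = (α : ℂ) • E α := by
  rw [h.eq_sum, Finset.mul_sum, Finset.sum_eq_single_of_mem α hα, Matrix.mul_smul,
    h.mul_eq α hα α hα, if_pos rfl]
  intro α' hα' hne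
  rw [Matrix.mul_smul, h.mul_eq α hα α' hα', if_neg hne.symm, smul_zero]

theorem mulVec_eq_zero_of_ne (h : IsSpectralResolution A σ E) {c : ℝ} {v : m → ℂ}
    (hv : A *ᵥ v = (c : ℂ) • v) {α : ℝ} (hα : α ∈ σ) (hne : α ≠ c) : E α *ᵥ v = 0 := by
  have hsub : ((α : ℂ) - c) • (E α *ᵥ v) = 0 := by
    rw [sub_smul, ← smul_mulVec, ← h.mul_eq_smul hα, ← mulVec_mulVec, hv, mulVec_smul,
      sub_self]
  exact (smul_eq_zero.mp hsub).resolve_left (sub_ne_zero.mpr (by exact_mod_cast hne))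

theorem mulVec_eq_ite (h : IsSpectralResolution A σ E) {c : ℝ} {v : m → ℂ}
    (hv : A *ᵥ v = (c : ℂ) • v) {α : ℝ} (hα : α ∈ σ) :
    E α *ᵥ v = if α = c then v else 0 := by
  split_ifs with hαc
  · subst hαc
    calc E α *ᵥ v = ∑ α' ∈ σ, E α' *ᵥ v :=
          (Finset.sum_eq_single_of_mem α hα fun α' hα' hne =>
            h.mulVec_eq_zero_of_ne hv hα' hne).symm
      _ = v := by rw [← sum_mulVec, h.sum_eq_one, one_mulVec]
  · exact h.mulVec_eq_zero_of_ne hv hα hαc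

theorem sum_smul_mulVec (h : IsSpectralResolution A σ E) (g : ℝ → ℝ) {c : ℝ} (hc : c ∈ σ)
    {v : m → ℂ} (hv : A *ᵥ v = (c : ℂ) • v) :
    (∑ α ∈ σ, (g α : ℂ) • E α) *ᵥ v = (g c : ℂ) • v := by
  simp_rw [sum_mulVec, smul_mulVec]
  rw [Finset.sum_congr rfl fun α hα => by rw [h.mulVec_eq_ite hv hα]]
  simp [hc]

theorem sum_mulVec_of_mem {Δ : Finset ℝ} (h : IsSpectralResolution A σ E) (hΔ : Δ ⊆ σ)
    {c : ℝ} (hc : c ∈ Δ) {v : m → ℂ} (hv : A *ᵥ v = (c : ℂ) • v) :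
    (∑ α ∈ Δ, E α) *ᵥ v = v := by
  rw [sum_mulVec, Finset.sum_congr rfl fun α hα => h.mulVec_eq_ite hv (hΔ hα),
    Finset.sum_ite_eq' Δ c, if_pos hc]

theorem star_dotProduct_eq_zero (h : IsSpectralResolution A σ E) {c c' : ℝ} (hc : c ∈ σ)
    (hEc : (E c).IsHermitian) (hne : c' ≠ c) {v w : m → ℂ} (hv : A *ᵥ v = (c : ℂ) • v)
    (hw : A *ᵥ w = (c' : ℂ) • w) : star w ⬝ᵥ v = 0 := by
  calc star w ⬝ᵥ v = star w ⬝ᵥ (E c *ᵥ v) := by rw [h.mulVec_eq_ite hv hc, if_pos rfl]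
    _ = star (E c *ᵥ w) ⬝ᵥ v := by rw [dotProduct_mulVec, star_mulVec, hEc.eq]
    _ = 0 := by rw [h.mulVec_eq_zero_of_ne hw hc hne.symm, star_zero, zero_dotProduct]

theorem sum_mul_vecMulVec_add_mul (h : IsSpectralResolution A σ E)
    (hE : ∀ α ∈ σ, (E α).IsHermitian) {Δ : Finset ℝ} (hΔ : Δ ⊆ σ) {c₀ c₁ : ℝ} (hc₀ : c₀ ∈ Δ)
    (hc₁ : c₁ ∈ Δ) (hne : c₀ ≠ c₁) {v₀ v₁ : m → ℂ} (hv₀ : A *ᵥ v₀ = (c₀ : ℂ) • v₀)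
    (hv₁ : A *ᵥ v₁ = (c₁ : ℂ) • v₁) :
    ∑ α ∈ Δ, E α * vecMulVec (v₀ + v₁) (star (v₀ + v₁)) * E α =
      vecMulVec v₀ (star v₀) + vecMulVec v₁ (star v₁) := by
  have hproj : ∀ α ∈ Δ, E α *ᵥ (v₀ + v₁) =
      (if α = c₀ then v₀ else 0) + (if α = c₁ then v₁ else 0) := fun α hα => by
    rw [mulVec_add, h.mulVec_eq_ite hv₀ (hΔ hα), h.mulVec_eq_ite hv₁ (hΔ hα)]
  calc ∑ α ∈ Δ, E α * vecMulVec (v₀ + v₁) (star (v₀ + v₁)) * E α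
      = ∑ α ∈ Δ, vecMulVec (E α *ᵥ (v₀ + v₁)) (star (E α *ᵥ (v₀ + v₁))) :=
        Finset.sum_congr rfl fun α hα => by
          rw [← mul_vecMulVec_star_mul_conjTranspose, (hE α (hΔ hα)).eq]
    _ = ∑ α ∈ {c₀, c₁}, vecMulVec (E α *ᵥ (v₀ + v₁)) (star (E α *ᵥ (v₀ + v₁))) := by
        refine (Finset.sum_subset (by simp [Finset.insert_subset_iff, hc₀, hc₁])
          fun α hα hα' => ?_).symm
        simp only [Finset.mem_insert, Finset.mem_singleton, not_or] at hα'
        simp [hproj α hα, hα'.1, hα'.2]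
    _ = vecMulVec v₀ (star v₀) + vecMulVec v₁ (star v₁) := by
        rw [Finset.sum_pair hne, hproj c₀ hc₀, hproj c₁ hc₁]
        simp [hne, hne.symm]

end IsSpectralResolution

section Superposition

variable {m : Type*} [Fintype m] {φ₀ φ₁ : m → ℂ}

theorem inv_sqrt_two_mul_star : (Real.sqrt 2 : ℂ)⁻¹ * star (Real.sqrt 2 : ℂ)⁻¹ = 2⁻¹ := by
  rw [star_inv₀, Complex.star_def, Complex.conj_ofReal, ← mul_inv, ← Complex.ofReal_mul,
    Real.mul_self_sqrt zero_le_two, Complex.ofReal_ofNat]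

theorem star_dotProduct_self_inv_sqrt_two_smul_add (hu₀ : star φ₀ ⬝ᵥ φ₀ = 1)
    (hu₁ : star φ₁ ⬝ᵥ φ₁ = 1) (h₀₁ : star φ₀ ⬝ᵥ φ₁ = 0) (h₁₀ : star φ₁ ⬝ᵥ φ₀ = 0) :
    star ((Real.sqrt 2 : ℂ)⁻¹ • (φ₀ + φ₁)) ⬝ᵥ ((Real.sqrt 2 : ℂ)⁻¹ • (φ₀ + φ₁)) = 1 := by
  rw [star_smul, smul_dotProduct, dotProduct_smul, star_add, add_dotProduct, dotProduct_add,
    dotProduct_add, hu₀, hu₁, h₀₁, h₁₀, smul_smul, mul_comm, inv_sqrt_two_mul_star]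
  norm_num

theorem half_smul_add_vecMulVec_ne (h₀ : φ₀ ≠ 0) (hu₁ : star φ₁ ⬝ᵥ φ₁ = 1)
    (h₀₁ : star φ₀ ⬝ᵥ φ₁ = 0) :
    (2 : ℂ)⁻¹ • (vecMulVec φ₀ (star φ₀) + vecMulVec φ₁ (star φ₁)) ≠
      vecMulVec ((Real.sqrt 2 : ℂ)⁻¹ • (φ₀ + φ₁)) (star ((Real.sqrt 2 : ℂ)⁻¹ • (φ₀ + φ₁))) := by
  intro heq
  have happly := congrArg (· *ᵥ φ₁) heq
  simp only [smul_mulVec, add_mulVec, vecMulVec_mulVec, op_smul_eq_smul, star_smul,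
    smul_dotProduct, star_add, add_dotProduct, h₀₁, hu₁, zero_smul, one_smul, zero_add,
    smul_eq_mul, mul_one, smul_smul] at happly
  rw [mul_comm, inv_sqrt_two_mul_star, smul_add, right_eq_add, smul_eq_zero] at happly
  exact h₀ (happly.resolve_left (by norm_num))

end Superposition

theorem stmt9_general {n : ℕ}
    (A : Matrix (Fin n) (Fin n) ℂ)
    (σA : Finset ℝ) (E : ℝ → Matrix (Fin n) (Fin n) ℂ)
    (hEherm : ∀ α ∈ σA, (E α).IsHermitian)
    (hEorth : ∀ α ∈ σA, ∀ α' ∈ σA, E α * E α' = if α = α' then E α else 0)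
    (hEsum : ∑ α ∈ σA, E α = 1)
    (hAdec : A = ∑ α ∈ σA, (α : ℂ) • E α)
    (Δ : Finset ℝ) (hΔ : Δ ⊆ σA)
    (α₀ α₁ : ℝ) (hα₀ : α₀ ∈ Δ) (hα₁ : α₁ ∈ Δ) (hαne : α₀ ≠ α₁)
    (g : ℝ → ℝ) (β : ℝ)
    (hgconst : ∀ α ∈ Δ, g α = β)
    (φ₀ φ₁ : Fin n → ℂ)
    (hu₀ : star φ₀ ⬝ᵥ φ₀ = 1) (hu₁ : star φ₁ ⬝ᵥ φ₁ = 1)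
    (hφ₀ : A *ᵥ φ₀ = (α₀ : ℂ) • φ₀) (hφ₁ : A *ᵥ φ₁ = (α₁ : ℂ) • φ₁)
    (ψ : Fin n → ℂ) (hψ : ψ = ((Real.sqrt 2 : ℂ))⁻¹ • (φ₀ + φ₁)) :
    (∑ α ∈ σA, (g α : ℂ) • E α) *ᵥ ψ = (β : ℂ) • ψ ∧
    ((vecMulVec ψ (star ψ) * ∑ α ∈ Δ, E α).trace⁻¹ •
        ((∑ α ∈ Δ, E α) * vecMulVec ψ (star ψ) * ∑ α ∈ Δ, E α))
      = vecMulVec ψ (star ψ) ∧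
    ((vecMulVec ψ (star ψ) * ∑ α ∈ Δ, E α).trace⁻¹ •
        ∑ α ∈ Δ, E α * vecMulVec ψ (star ψ) * E α)
      = (2 : ℂ)⁻¹ • (vecMulVec φ₀ (star φ₀) + vecMulVec φ₁ (star φ₁)) ∧
    (2 : ℂ)⁻¹ • (vecMulVec φ₀ (star φ₀) + vecMulVec φ₁ (star φ₁))
      ≠ vecMulVec ψ (star ψ) := by
  have hE : IsSpectralResolution A σA E := ⟨hEorth, hEsum, hAdec⟩
  have h₀₁ : star φ₀ ⬝ᵥ φ₁ = 0 :=
    hE.star_dotProduct_eq_zero (hΔ hα₁) (hEherm α₁ (hΔ hα₁)) hαne hφ₁ hφ₀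
  have h₁₀ : star φ₁ ⬝ᵥ φ₀ = 0 :=
    hE.star_dotProduct_eq_zero (hΔ hα₀) (hEherm α₀ (hΔ hα₀)) hαne.symm hφ₀ hφ₁
  have hEΔ : (∑ α ∈ Δ, E α).IsHermitian :=
    isSelfAdjoint_sum Δ fun α hα => (hEherm α (hΔ hα)).isSelfAdjoint
  have hEΔψ : (∑ α ∈ Δ, E α) *ᵥ ψ = ψ := by
    rw [hψ, mulVec_smul, mulVec_add, hE.sum_mulVec_of_mem hΔ hα₀ hφ₀,
      hE.sum_mulVec_of_mem hΔ hα₁ hφ₁]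
  have htrace : (vecMulVec ψ (star ψ) * ∑ α ∈ Δ, E α).trace = 1 := by
    rw [vecMulVec_star_mul_of_mulVec_eq_self hEΔ hEΔψ, trace_vecMulVec, dotProduct_comm, hψ,
      star_dotProduct_self_inv_sqrt_two_smul_add hu₀ hu₁ h₀₁ h₁₀]
  have hsmul_eigen : ∀ {c : ℝ} {v : Fin n → ℂ}, A *ᵥ v = (c : ℂ) • v →
      A *ᵥ ((Real.sqrt 2 : ℂ)⁻¹ • v) = (c : ℂ) • ((Real.sqrt 2 : ℂ)⁻¹ • v) := fun hv => by
    rw [mulVec_smul, hv, smul_comm]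
  refine ⟨?_, ?_, ?_, ?_⟩
  · rw [hψ, mulVec_smul, mulVec_add, hE.sum_smul_mulVec g (hΔ hα₀) hφ₀,
      hE.sum_smul_mulVec g (hΔ hα₁) hφ₁, hgconst α₀ hα₀, hgconst α₁ hα₁, ← smul_add, smul_comm]
  · rw [htrace, inv_one, one_smul, mul_vecMulVec, hEΔψ,
      vecMulVec_star_mul_of_mulVec_eq_self hEΔ hEΔψ]
  · rw [htrace, inv_one, one_smul, hψ, smul_add,
      hE.sum_mul_vecMulVec_add_mul hEherm hΔ hα₀ hα₁ hαne (hsmul_eigen hφ₀) (hsmul_eigen hφ₁),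
      vecMulVec_smul_star_smul, vecMulVec_smul_star_smul, inv_sqrt_two_mul_star, smul_add]
  · have hφ₀_ne : φ₀ ≠ 0 := by rintro rfl; simp at hu₀
    exact hψ ▸ half_smul_add_vecMulVec_ne hφ₀_ne hu₁ h₀₁

/-- Let `A = ∑ α ∈ σA, α • E α` be the spectral decomposition of the
self-adjoint `A`, let `Δ ⊆ σA` contain distinct eigenvalues `α₀ ≠ α₁`, and let
`g : ℝ → ℝ` be constant on `Δ` with value `β` and `g⁻¹(β) ∩ σA = Δ`. Let `φ₀, φ₁`
be unit eigenvectors for `α₀, α₁` and `ψ = (φ₀ + φ₁)/√2`. Then `ψ` is an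
eigenvector of `g(A)` with eigenvalue `β`, the update `T_{(β, g(A))}` fixes the
pure state `|ψ⟩⟨ψ|`, while `T_{(Δ, A)}(|ψ⟩⟨ψ|) = (1/2)(|φ₀⟩⟨φ₀| + |φ₁⟩⟨φ₁|) ≠ |ψ⟩⟨ψ|`. -/
theorem stmt9 {n : ℕ}
    (A : Matrix (Fin n) (Fin n) ℂ) (hA : A.IsHermitian)
    (σA : Finset ℝ) (E : ℝ → Matrix (Fin n) (Fin n) ℂ)
    (hEherm : ∀ α ∈ σA, (E α).IsHermitian)
    (hEorth : ∀ α ∈ σA, ∀ α' ∈ σA, E α * E α' = if α = α' then E α else 0)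
    (hEsum : ∑ α ∈ σA, E α = 1)
    (hAdec : A = ∑ α ∈ σA, (α : ℂ) • E α)
    (Δ : Finset ℝ) (hΔ : Δ ⊆ σA)
    (α₀ α₁ : ℝ) (hα₀ : α₀ ∈ Δ) (hα₁ : α₁ ∈ Δ) (hαne : α₀ ≠ α₁)
    (g : ℝ → ℝ) (β : ℝ)
    (hgconst : ∀ α ∈ Δ, g α = β)
    (hfiber : σA.filter (fun α => g α = β) = Δ)
    (φ₀ φ₁ : Fin n → ℂ)
    (hu₀ : star φ₀ ⬝ᵥ φ₀ = 1) (hu₁ : star φ₁ ⬝ᵥ φ₁ = 1)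
    (hφ₀ : A *ᵥ φ₀ = (α₀ : ℂ) • φ₀) (hφ₁ : A *ᵥ φ₁ = (α₁ : ℂ) • φ₁)
    (ψ : Fin n → ℂ) (hψ : ψ = ((Real.sqrt 2 : ℂ))⁻¹ • (φ₀ + φ₁)) :
    (∑ α ∈ σA, (g α : ℂ) • E α) *ᵥ ψ = (β : ℂ) • ψ ∧
    ((vecMulVec ψ (star ψ) * ∑ α ∈ Δ, E α).trace⁻¹ •
        ((∑ α ∈ Δ, E α) * vecMulVec ψ (star ψ) * ∑ α ∈ Δ, E α))
      = vecMulVec ψ (star ψ) ∧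
    ((vecMulVec ψ (star ψ) * ∑ α ∈ Δ, E α).trace⁻¹ •
        ∑ α ∈ Δ, E α * vecMulVec ψ (star ψ) * E α)
      = (2 : ℂ)⁻¹ • (vecMulVec φ₀ (star φ₀) + vecMulVec φ₁ (star φ₁)) ∧
    (2 : ℂ)⁻¹ • (vecMulVec φ₀ (star φ₀) + vecMulVec φ₁ (star φ₁))
      ≠ vecMulVec ψ (star ψ) :=
  stmt9_general A σA E hEherm hEorth hEsum hAdec Δ hΔ α₀ α₁ hα₀ hα₁ hαne g β hgconst φ₀ φ₁ hu₀ hu₁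
    hφ₀ hφ₁ ψ hψ
end

section
/- Let H be a finite-dimensional complex Hilbert space and V a map from self-adjoint operators on H to ℝ satisfying the functional composition principle: V(g(A)) = g(V(A)) for every self-adjoint A and every function g : ℝ → ℝ (with g(A) defined via the spectral decomposition). Then V is quasi-linear and multiplicative on commuting operators: for all commuting self-adjoint A, B and all real α, β, V(αA + βB) = αV(A) + βV(B) and V(AB) = V(A)V(B). -/
/-!
Two commuting Hermitian matrices `A`, `B` have a common orthonormal eigenbasis `(vᵢ)`; the rank-one
projections `Pᵢ` onto its vectors form a resolution of the identity with `A = ∑ αᵢ Pᵢ` and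
`B = ∑ βᵢ Pᵢ`. Label the `Pᵢ` by distinct reals `cᵢ` and apply the functional composition principle
to `C = ∑ cᵢ Pᵢ`: it gives `V (∑ g(cᵢ) Pᵢ) = g (V C)` for every `g : ℝ → ℝ`. Comparing `g = 1`
with `g` the indicator of the labels shows that `V C` is a label `c_{i₀}`, and then `g` with
`g(cᵢ) = fᵢ` gives `V (∑ fᵢ Pᵢ) = f_{i₀}`. On the algebra spanned by the `Pᵢ`, which contains `A`,
`B`, `aA + bB` and `AB`, `V` is thus evaluation at `i₀`, hence linear and multiplicative.
-/

open Module InnerProductSpace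

structure IsResolutionOfIdentity {ι R : Type*} [Fintype ι] [Semiring R] [Star R] (P : ι → R) :
    Prop extends CompleteOrthogonalIdempotents P where
  isSelfAdjoint : ∀ i, IsSelfAdjoint (P i)

theorem IsResolutionOfIdentity.map {ι R S F : Type*} [Fintype ι] [Semiring R] [Star R]
    [Semiring S] [Star S] [FunLike F R S] [RingHomClass F R S] [StarHomClass F R S]
    {P : ι → R} (hP : IsResolutionOfIdentity P) (f : F) : IsResolutionOfIdentity (f ∘ P) where
  toCompleteOrthogonalIdempotents := hP.toCompleteOrthogonalIdempotents.map (f : R →+* S)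
  isSelfAdjoint i := (hP.isSelfAdjoint i).map f

theorem OrthogonalIdempotents.sum_smul_mul_sum_smul {ι S R : Type*} [Fintype ι] [CommSemiring S]
    [Semiring R] [Algebra S R] {P : ι → R} (hP : OrthogonalIdempotents P) (f g : ι → S) :
    (∑ i, f i • P i) * (∑ i, g i • P i) = ∑ i, (f i * g i) • P i := by
  classical
  simp_rw [Finset.sum_mul_sum, smul_mul_smul_comm, hP.mul_eq, smul_ite, smul_zero,
    Finset.sum_ite_eq, Finset.mem_univ, if_true]

namespace OrthonormalBasis

variable {ι 𝕜 E : Type*} [Fintype ι] [RCLike 𝕜] [NormedAddCommGroup E] [InnerProductSpace 𝕜 E]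
  (b : OrthonormalBasis ι 𝕜 E)

theorem isResolutionOfIdentity_rankOne [CompleteSpace E] :
    IsResolutionOfIdentity fun i => rankOne 𝕜 (b i) (b i) where
  idem i := isIdempotentElem_rankOne_self (b.norm_eq_one i)
  ortho i j hij := by
    classical
    simp [ContinuousLinearMap.mul_def, rankOne_comp_rankOne, b.inner_eq_ite, hij]
  complete := b.sum_rankOne_eq_id
  isSelfAdjoint i := adjoint_rankOne _ _

theorem eq_sum_smul_rankOne {T : E →L[𝕜] E} {μ : ι → 𝕜} (hT : ∀ i, T (b i) = μ i • b i) :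
    T = ∑ i, μ i • rankOne 𝕜 (b i) (b i) := by
  calc T = T ∘L ∑ i, rankOne 𝕜 (b i) (b i) := by
        rw [b.sum_rankOne_eq_id, ContinuousLinearMap.comp_id]
    _ = ∑ i, μ i • rankOne 𝕜 (b i) (b i) := by
        simp [ContinuousLinearMap.comp_finsetSum, comp_rankOne, hT]

end OrthonormalBasis

namespace LinearMap.IsSymmetric

variable {𝕜 E : Type*} [RCLike 𝕜] [NormedAddCommGroup E] [InnerProductSpace 𝕜 E]
  {T S : E →ₗ[𝕜] E}

theorem ofReal_re_eq_of_apply_eq_smul (hT : T.IsSymmetric) {μ : 𝕜} {v : E} (hv : v ≠ 0)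
    (h : T v = μ • v) : (RCLike.re μ : 𝕜) = μ :=
  RCLike.conj_eq_iff_re.mp <| hT.conj_eigenvalue_eq_self <|
    End.hasEigenvalue_of_hasEigenvector ⟨End.mem_eigenspace_iff.mpr h, hv⟩

theorem exists_orthonormalBasis_apply_eq_smul_of_commute [FiniteDimensional 𝕜 E]
    (hT : T.IsSymmetric) (hS : S.IsSymmetric) (hTS : Commute T S) :
    ∃ (b : OrthonormalBasis (Fin (finrank 𝕜 E)) 𝕜 E) (μ ν : Fin (finrank 𝕜 E) → ℝ),
      ∀ i, T (b i) = (μ i : 𝕜) • b i ∧ S (b i) = (ν i : 𝕜) • b i := by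
  classical
  let W : 𝕜 × 𝕜 → Submodule 𝕜 E := fun i => End.eigenspace T i.2 ⊓ End.eigenspace S i.1
  have hW : DirectSum.IsInternal W := hT.directSum_isInternal_of_commute hS hTS
  let _ := hW.submodule_iSupIndep.fintypeNeBotOfFiniteDimensional
  have hint : DirectSum.IsInternal fun i : {i // W i ≠ ⊥} => W i :=
    DirectSum.isInternal_ne_bot_iff.mpr hW
  have horth := (hT.orthogonalFamily_eigenspace_inf_eigenspace hS).comp
    (Subtype.val_injective (p := fun i => W i ≠ ⊥))
  let b := hint.subordinateOrthonormalBasis rfl horth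
  let idx i := (hint.subordinateOrthonormalBasisIndex rfl i horth).1
  refine ⟨b, fun i => RCLike.re (idx i).2, fun i => RCLike.re (idx i).1, fun i => ?_⟩
  obtain ⟨hTi, hSi⟩ :=
    Submodule.mem_inf.mp (hint.subordinateOrthonormalBasis_subordinate rfl i horth)
  rw [End.mem_eigenspace_iff] at hTi hSi
  exact ⟨by rw [hTi, hT.ofReal_re_eq_of_apply_eq_smul (b.orthonormal.ne_zero i) hTi],
    by rw [hSi, hS.ofReal_re_eq_of_apply_eq_smul (b.orthonormal.ne_zero i) hSi]⟩

end LinearMap.IsSymmetric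

theorem Matrix.IsHermitian.exists_isResolutionOfIdentity_of_commute {m 𝕜 : Type*} [Fintype m]
    [DecidableEq m] [RCLike 𝕜] {A B : Matrix m m 𝕜} (hA : A.IsHermitian) (hB : B.IsHermitian)
    (hAB : Commute A B) :
    ∃ (P : Fin (finrank 𝕜 (EuclideanSpace 𝕜 m)) → Matrix m m 𝕜)
      (α β : Fin (finrank 𝕜 (EuclideanSpace 𝕜 m)) → ℝ),
      IsResolutionOfIdentity P ∧ A = ∑ i, (α i : 𝕜) • P i ∧ B = ∑ i, (β i : 𝕜) • P i := by
  let Φ := toEuclideanCLM (n := m) (𝕜 := 𝕜)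
  have hsymm {M : Matrix m m 𝕜} (hM : M.IsHermitian) : (toEuclideanLin M).IsSymmetric :=
    isSymmetric_toEuclideanLin_iff.mpr hM
  have hcomm : Commute (toEuclideanLin A) (toEuclideanLin B) :=
    (hAB.map Φ).map ContinuousLinearMap.toLinearMapRingHom
  obtain ⟨v, μ, ν, hv⟩ :=
    (hsymm hA).exists_orthonormalBasis_apply_eq_smul_of_commute (hsymm hB) hcomm
  refine ⟨fun i => Φ.symm (rankOne 𝕜 (v i) (v i)), μ, ν,
    v.isResolutionOfIdentity_rankOne.map Φ.symm, ?_, ?_⟩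
  · rw [← Φ.symm_apply_apply A, v.eq_sum_smul_rankOne (T := Φ A) fun i => (hv i).1, map_sum]
    simp_rw [map_smul]
  · rw [← Φ.symm_apply_apply B, v.eq_sum_smul_rankOne (T := Φ B) fun i => (hv i).2, map_sum]
    simp_rw [map_smul]

def FunctionalCompositionPrinciple {m : Type*} [Fintype m] [DecidableEq m]
    (V : Matrix m m ℂ → ℝ) : Prop :=
  ∀ (A : Matrix m m ℂ), A.IsHermitian →
    ∀ (σA : Finset ℝ) (E : ℝ → Matrix m m ℂ),
      (∀ α ∈ σA, (E α).IsHermitian) →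
      (∀ α ∈ σA, ∀ α' ∈ σA, E α * E α' = if α = α' then E α else 0) →
      (∑ α ∈ σA, E α = 1) →
      (A = ∑ α ∈ σA, (α : ℂ) • E α) →
      ∀ g : ℝ → ℝ, V (∑ α ∈ σA, (g α : ℂ) • E α) = g (V A)

namespace FunctionalCompositionPrinciple

variable {m ι : Type*} [Fintype m] [DecidableEq m] [Fintype ι] {V : Matrix m m ℂ → ℝ}
  (hV : FunctionalCompositionPrinciple V) {P : ι → Matrix m m ℂ} (hP : IsResolutionOfIdentity P)
include hV hP

theorem apply_sum_smul (c : ι ↪ ℝ) (g : ℝ → ℝ) :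
    V (∑ i, (g (c i) : ℂ) • P i) = g (V (∑ i, (c i : ℂ) • P i)) := by
  classical
  have hE (i : ι) : Function.extend c P 0 (c i) = P i := c.injective.extend_apply P 0 i
  have hC : (∑ i, (c i : ℂ) • P i).IsHermitian :=
    isSelfAdjoint_sum _ fun i _ => IsSelfAdjoint.smul (Complex.conj_ofReal _) (hP.isSelfAdjoint i)
  simpa [hE] using hV _ hC (Finset.univ.map c) (Function.extend c P 0)
    (by simpa [hE] using fun i => (hP.isSelfAdjoint i).isHermitian) (by simpa [hE] using hP.mul_eq)
    (by simpa [hE] using hP.complete) (by simp [hE]) g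

theorem exists_forall_apply_sum_smul_eq : ∃ i₀, ∀ f : ι → ℝ, V (∑ i, (f i : ℂ) • P i) = f i₀ := by
  classical
  let c : ι ↪ ℝ := (Fintype.equivFin ι).toEmbedding.trans (Fin.valEmbedding.trans Nat.castEmbedding)
  have hone := hV.apply_sum_smul hP c fun _ => 1
  have hrange := hV.apply_sum_smul hP c fun x => if x ∈ Set.range c then 1 else 0
  -- `V 1 = 1` by `hone`, while `hrange` says `V 1` is the indicator of `Set.range c` at `V C`.
  obtain ⟨i₀, hi₀⟩ : V (∑ i, (c i : ℂ) • P i) ∈ Set.range c := by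
    by_contra h
    simp_all
  refine ⟨i₀, fun f => ?_⟩
  have := hV.apply_sum_smul hP c (Function.extend c f 0)
  rw [← hi₀] at this
  simpa only [c.injective.extend_apply] using this

end FunctionalCompositionPrinciple

/-- If `V` maps self-adjoint operators on a finite-dimensional
complex Hilbert space to `ℝ` and satisfies the functional composition principle
(`V (g(A)) = g (V A)` whenever `A = ∑ α ∈ σA, α • E α` is a spectral decomposition
and `g(A) = ∑ α ∈ σA, g α • E α`), then `V` is quasi-linear and multiplicative on
commuting self-adjoint operators. -/
theorem stmt16 {n : ℕ} (V : Matrix (Fin n) (Fin n) ℂ → ℝ)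
    (hFCP : ∀ (A : Matrix (Fin n) (Fin n) ℂ), A.IsHermitian →
      ∀ (σA : Finset ℝ) (E : ℝ → Matrix (Fin n) (Fin n) ℂ),
        (∀ α ∈ σA, (E α).IsHermitian) →
        (∀ α ∈ σA, ∀ α' ∈ σA, E α * E α' = if α = α' then E α else 0) →
        (∑ α ∈ σA, E α = 1) →
        (A = ∑ α ∈ σA, (α : ℂ) • E α) →
        ∀ g : ℝ → ℝ, V (∑ α ∈ σA, (g α : ℂ) • E α) = g (V A)) :
    ∀ (A B : Matrix (Fin n) (Fin n) ℂ), A.IsHermitian → B.IsHermitian →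
      A * B = B * A → ∀ a b : ℝ,
        V ((a : ℂ) • A + (b : ℂ) • B) = a * V A + b * V B ∧
        V (A * B) = V A * V B := by
  intro A B hA hB hAB a b
  obtain ⟨P, α, β, hP, rfl, rfl⟩ := hA.exists_isResolutionOfIdentity_of_commute hB hAB
  obtain ⟨i₀, hV⟩ := FunctionalCompositionPrinciple.exists_forall_apply_sum_smul_eq hFCP hP
  -- the matrix lemma casts `ℝ → ℂ` by `RCLike.ofReal`, `hV` by `Complex.ofReal`
  simp only [RCLike.ofReal_eq_complex_ofReal]
  constructor
  · rw [hV α, hV β, ← hV fun i => a * α i + b * β i]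
    simp only [Complex.ofReal_add, Complex.ofReal_mul, add_smul, mul_smul, Finset.sum_add_distrib,
      Finset.smul_sum]
  · rw [hP.sum_smul_mul_sum_smul, hV α, hV β, ← hV fun i => α i * β i]
    simp only [Complex.ofReal_mul]
end

section
/- Let A be a self-adjoint operator on a finite-dimensional complex Hilbert space with eigenprojections {E_α}, ψ a unit vector, and Δ ⊆ σ(A) with E_Δ ψ ≠ 0 where E_Δ = Σ_{α∈Δ} E_α. Then the updated state T_{(Δ,A)}(|ψ⟩⟨ψ|) = (1/⟨ψ, E_Δψ⟩) Σ_{α∈Δ} E_α|ψ⟩⟨ψ|E_α is a rank-one projection (a pure state) if and only if E_Δψ is an eigenvector of A whose eigenvalue lies in Δ. -/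
/-!
Write `v α = E α ψ`. The `v α` with `α ∈ Δ` are pairwise orthogonal, `E α |ψ⟩⟨ψ| E α = |v α⟩⟨v α|`
and `⟨ψ, E_Δ ψ⟩ = ∑ ‖v α‖²`, so the updated state is `ρ = (∑ ‖v α‖²)⁻¹ ∑ |v α⟩⟨v α|`. A nonzero
`v γ` is an eigenvector of `ρ` with eigenvalue `‖v γ‖² / ∑ ‖v α‖²`; idempotence forces this to be
`1`, so every other `v α` vanishes, and conversely a single nonzero `v γ` makes `ρ` the projection
onto `ℂ v γ`. On the spectral side `E β A = β E β` turns `A E_Δ ψ = α E_Δ ψ` into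
`β v β = α v β`. Thus both conditions say that exactly one `v α`, `α ∈ Δ`, is nonzero.
-/

open Matrix

open scoped ComplexOrder

theorem mul_vecMulVec_star_mul_of_isHermitian {m : Type*} [Fintype m] {M : Matrix m m ℂ}
    (hM : M.IsHermitian) (ψ : m → ℂ) :
    M * vecMulVec ψ (star ψ) * M = vecMulVec (M *ᵥ ψ) (star (M *ᵥ ψ)) := by
  rw [mul_vecMulVec, vecMulVec_mul, star_mulVec, hM.eq]

theorem star_mulVec_dotProduct_mulVec_of_isHermitian {m : Type*} [Fintype m] {M : Matrix m m ℂ}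
    (hM : M.IsHermitian) (N : Matrix m m ℂ) (x y : m → ℂ) :
    star (M *ᵥ x) ⬝ᵥ (N *ᵥ y) = star x ⬝ᵥ ((M * N) *ᵥ y) := by
  rw [star_mulVec, hM.eq, ← dotProduct_mulVec, mulVec_mulVec]

section PureState

variable {m : Type*} [Fintype m]

def IsPureState (ρ : Matrix m m ℂ) : Prop :=
  ρ.IsHermitian ∧ ρ * ρ = ρ ∧ ρ.rank = 1

theorem rank_vecMulVec_star_self {v : m → ℂ} (hv : v ≠ 0) :
    (vecMulVec v (star v)).rank = 1 := by
  refine le_antisymm (rank_vecMulVec_le _ _) (Nat.one_le_iff_ne_zero.2 fun h0 => hv ?_)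
  have hmem : vecMulVec v (star v) *ᵥ v ∈ LinearMap.range (vecMulVec v (star v)).mulVecLin :=
    ⟨v, rfl⟩
  rw [Matrix.rank, Submodule.finrank_eq_zero] at h0
  rw [h0, Submodule.mem_bot, vecMulVec_mulVec] at hmem
  simpa using hmem

theorem isPureState_smul_vecMulVec_star_self {v : m → ℂ} (hv : v ≠ 0) :
    IsPureState ((star v ⬝ᵥ v)⁻¹ • vecMulVec v (star v)) := by
  have hc : star v ⬝ᵥ v ≠ 0 := dotProduct_star_self_eq_zero.not.2 hv
  refine ⟨?_, ?_, ?_⟩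
  · rw [IsHermitian, conjTranspose_smul, conjTranspose_vecMulVec, star_star, star_inv₀,
      (IsSelfAdjoint.of_nonneg (dotProduct_star_self_nonneg v)).star_eq]
  · rw [smul_mul_smul, vecMulVec_mul_vecMulVec, vecMulVec_smul, smul_smul, mul_assoc,
      inv_mul_cancel₀ hc, mul_one]
  · rw [rank_smul_of_mem_nonZeroDivisors _ (mem_nonZeroDivisors_of_ne_zero (inv_ne_zero hc)),
      rank_vecMulVec_star_self hv]

variable {ι : Type*} {s : Finset ι} {v : ι → m → ℂ}

noncomputable def normalizedOuterSum (s : Finset ι) (v : ι → m → ℂ) : Matrix m m ℂ :=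
  (∑ i ∈ s, star (v i) ⬝ᵥ v i)⁻¹ • ∑ i ∈ s, vecMulVec (v i) (star (v i))

theorem sum_vecMulVec_star_mulVec_of_pairwise
    (horth : (s : Set ι).Pairwise fun i j => star (v i) ⬝ᵥ v j = 0) {j : ι} (hj : j ∈ s) :
    (∑ i ∈ s, vecMulVec (v i) (star (v i))) *ᵥ v j = (star (v j) ⬝ᵥ v j) • v j := by
  rw [sum_mulVec, Finset.sum_eq_single_of_mem j hj, vecMulVec_mulVec, op_smul_eq_smul]
  intro i hi hij
  rw [vecMulVec_mulVec, horth hi hj hij, MulOpposite.op_zero, zero_smul]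

theorem eq_zero_of_normalizedOuterSum_mul_self
    (horth : (s : Set ι).Pairwise fun i j => star (v i) ⬝ᵥ v j = 0)
    (hidem : normalizedOuterSum s v * normalizedOuterSum s v = normalizedOuterSum s v)
    {j : ι} (hj : j ∈ s) (hvj : v j ≠ 0) : ∀ i ∈ s, i ≠ j → v i = 0 := by
  classical
  set r : ι → ℂ := fun i => star (v i) ⬝ᵥ v i
  set c := ∑ i ∈ s, r i
  have hr_nonneg : ∀ i, 0 ≤ r i := fun i => dotProduct_star_self_nonneg (v i)
  have hrj : r j ≠ 0 := dotProduct_star_self_eq_zero.not.2 hvj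
  have hc : c ≠ 0 := ((lt_of_le_of_ne (hr_nonneg j) hrj.symm).trans_le
    (Finset.single_le_sum (fun i _ => hr_nonneg i) hj)).ne'
  have heig : normalizedOuterSum s v *ᵥ v j = (c⁻¹ * r j) • v j := by
    rw [normalizedOuterSum, smul_mulVec, sum_vecMulVec_star_mulVec_of_pairwise horth hj, smul_smul]
  have hscalar : c⁻¹ * r j * (c⁻¹ * r j) = c⁻¹ * r j := by
    have h := congrArg (· *ᵥ v j) hidem
    simp only [← mulVec_mulVec, heig, mulVec_smul, smul_smul] at h
    exact smul_left_injective ℂ hvj h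
  have hrjc : r j = c := by
    rw [mul_eq_left₀ (mul_ne_zero (inv_ne_zero hc) hrj), inv_mul_eq_one₀ hc] at hscalar
    exact hscalar.symm
  have hrest : ∑ i ∈ s.erase j, r i = 0 := by
    have h := Finset.add_sum_erase s r hj
    rwa [hrjc, add_eq_left] at h
  intro i hi hij
  exact dotProduct_star_self_eq_zero.1 <|
    (Finset.sum_eq_zero_iff_of_nonneg fun i _ => hr_nonneg i).1 hrest i
      (Finset.mem_erase.2 ⟨hij, hi⟩)

theorem isPureState_normalizedOuterSum_iff
    (horth : (s : Set ι).Pairwise fun i j => star (v i) ⬝ᵥ v j = 0) (hne : ∃ j ∈ s, v j ≠ 0) :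
    IsPureState (normalizedOuterSum s v) ↔ ∃ j ∈ s, ∀ i ∈ s, i ≠ j → v i = 0 := by
  obtain ⟨k, hk, hvk⟩ := hne
  constructor
  · exact fun h => ⟨k, hk, eq_zero_of_normalizedOuterSum_mul_self horth h.2.1 hk hvk⟩
  · rintro ⟨j, hj, hzero⟩
    have hvj : v j ≠ 0 := by
      rcases eq_or_ne k j with rfl | hkj
      · exact hvk
      · exact absurd (hzero k hk hkj) hvk
    rw [normalizedOuterSum,
      Finset.sum_eq_single_of_mem j hj fun i hi hij => by simp [hzero i hi hij],
      Finset.sum_eq_single_of_mem j hj fun i hi hij => by simp [hzero i hi hij]]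
    exact isPureState_smul_vecMulVec_star_self hvj

end PureState

section SpectralDecomposition

variable {m : Type*} [Fintype m] {σ : Finset ℝ} {E : ℝ → Matrix m m ℂ}

theorem mul_sum_smul_of_orthogonal
    (hEorth : ∀ α ∈ σ, ∀ α' ∈ σ, E α * E α' = if α = α' then E α else 0)
    {t : Finset ℝ} (ht : t ⊆ σ) (f : ℝ → ℂ) {β : ℝ} (hβ : β ∈ t) :
    E β * ∑ γ ∈ t, f γ • E γ = f β • E β := by
  rw [Finset.mul_sum, Finset.sum_eq_single_of_mem β hβ, mul_smul_comm,
    hEorth β (ht hβ) β (ht hβ), if_pos rfl]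
  intro γ hγ hγβ
  rw [mul_smul_comm, hEorth β (ht hβ) γ (ht hγ), if_neg hγβ.symm, smul_zero]

theorem sum_smul_mul_of_orthogonal
    (hEorth : ∀ α ∈ σ, ∀ α' ∈ σ, E α * E α' = if α = α' then E α else 0)
    (f : ℝ → ℂ) {β : ℝ} (hβ : β ∈ σ) :
    (∑ γ ∈ σ, f γ • E γ) * E β = f β • E β := by
  rw [Finset.sum_mul, Finset.sum_eq_single_of_mem β hβ, smul_mul_assoc,
    hEorth β hβ β hβ, if_pos rfl]
  intro γ hγ hγβ
  rw [smul_mul_assoc, hEorth γ hγ β hβ, if_neg hγβ, smul_zero]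

theorem exists_mulVec_eq_smul_iff_of_orthogonal
    (hEorth : ∀ α ∈ σ, ∀ α' ∈ σ, E α * E α' = if α = α' then E α else 0)
    {A : Matrix m m ℂ} (hAdec : A = ∑ α ∈ σ, (α : ℂ) • E α)
    {Δ : Finset ℝ} (hΔ : Δ ⊆ σ) (ψ : m → ℂ) :
    (∃ α ∈ Δ, A *ᵥ ((∑ α' ∈ Δ, E α') *ᵥ ψ) = (α : ℂ) • ((∑ α' ∈ Δ, E α') *ᵥ ψ)) ↔
      ∃ α ∈ Δ, ∀ β ∈ Δ, β ≠ α → E β *ᵥ ψ = 0 := by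
  have hEΔ : ∀ β ∈ Δ, E β * ∑ γ ∈ Δ, E γ = E β := fun β hβ => by
    simpa only [one_smul] using mul_sum_smul_of_orthogonal hEorth hΔ (fun _ => 1) hβ
  constructor
  · rintro ⟨α, hα, heig⟩
    refine ⟨α, hα, fun β hβ hβα => ?_⟩
    have hEA : E β * A = (β : ℂ) • E β := by
      rw [hAdec]
      exact mul_sum_smul_of_orthogonal hEorth subset_rfl _ (hΔ hβ)
    have h := congrArg (E β *ᵥ ·) heig
    simp only [mulVec_mulVec, mulVec_smul, ← Matrix.mul_assoc, hEA, smul_mul_assoc, hEΔ β hβ,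
      smul_mulVec] at h
    by_contra hne
    exact hβα (by exact_mod_cast smul_left_injective ℂ hne h)
  · rintro ⟨α, hα, hzero⟩
    have hEΔψ : (∑ α' ∈ Δ, E α') *ᵥ ψ = E α *ᵥ ψ := by
      rw [sum_mulVec, Finset.sum_eq_single_of_mem α hα hzero]
    refine ⟨α, hα, ?_⟩
    rw [hEΔψ, mulVec_mulVec, hAdec, sum_smul_mul_of_orthogonal hEorth _ (hΔ hα), smul_mulVec]

end SpectralDecomposition

theorem stmt18_general {n : ℕ} (A : Matrix (Fin n) (Fin n) ℂ)
    (σA : Finset ℝ) (E : ℝ → Matrix (Fin n) (Fin n) ℂ)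
    (hEherm : ∀ α ∈ σA, (E α).IsHermitian)
    (hEorth : ∀ α ∈ σA, ∀ α' ∈ σA, E α * E α' = if α = α' then E α else 0)
    (hAdec : A = ∑ α ∈ σA, (α : ℂ) • E α)
    (ψ : Fin n → ℂ)
    (Δ : Finset ℝ) (hΔ : Δ ⊆ σA)
    (hne : (∑ α ∈ Δ, E α) *ᵥ ψ ≠ 0) :
    (((star ψ ⬝ᵥ ((∑ α ∈ Δ, E α) *ᵥ ψ))⁻¹ •
        ∑ α ∈ Δ, E α * vecMulVec ψ (star ψ) * E α).IsHermitian ∧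
     ((star ψ ⬝ᵥ ((∑ α ∈ Δ, E α) *ᵥ ψ))⁻¹ •
        ∑ α ∈ Δ, E α * vecMulVec ψ (star ψ) * E α) *
       ((star ψ ⬝ᵥ ((∑ α ∈ Δ, E α) *ᵥ ψ))⁻¹ •
        ∑ α ∈ Δ, E α * vecMulVec ψ (star ψ) * E α)
       = ((star ψ ⬝ᵥ ((∑ α ∈ Δ, E α) *ᵥ ψ))⁻¹ •
        ∑ α ∈ Δ, E α * vecMulVec ψ (star ψ) * E α) ∧
     ((star ψ ⬝ᵥ ((∑ α ∈ Δ, E α) *ᵥ ψ))⁻¹ •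
        ∑ α ∈ Δ, E α * vecMulVec ψ (star ψ) * E α).rank = 1)
    ↔ ∃ α ∈ Δ, A *ᵥ ((∑ α' ∈ Δ, E α') *ᵥ ψ) = (α : ℂ) • ((∑ α' ∈ Δ, E α') *ᵥ ψ) := by
  set v : ℝ → Fin n → ℂ := fun α => E α *ᵥ ψ
  have horth : (Δ : Set ℝ).Pairwise fun α β => star (v α) ⬝ᵥ v β = 0 := fun α hα β hβ hαβ => by
    change star (E α *ᵥ ψ) ⬝ᵥ (E β *ᵥ ψ) = 0
    rw [star_mulVec_dotProduct_mulVec_of_isHermitian (hEherm α (hΔ hα)),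
      hEorth α (hΔ hα) β (hΔ hβ), if_neg hαβ, zero_mulVec, dotProduct_zero]
  have hnorm : star ψ ⬝ᵥ ((∑ α ∈ Δ, E α) *ᵥ ψ) = ∑ α ∈ Δ, star (v α) ⬝ᵥ v α := by
    rw [sum_mulVec, dotProduct_sum]
    refine Finset.sum_congr rfl fun α hα => ?_
    change _ = star (E α *ᵥ ψ) ⬝ᵥ (E α *ᵥ ψ)
    rw [star_mulVec_dotProduct_mulVec_of_isHermitian (hEherm α (hΔ hα)),
      hEorth α (hΔ hα) α (hΔ hα), if_pos rfl]
  have hstate : ∑ α ∈ Δ, E α * vecMulVec ψ (star ψ) * E α =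
      ∑ α ∈ Δ, vecMulVec (v α) (star (v α)) :=
    Finset.sum_congr rfl fun α hα => mul_vecMulVec_star_mul_of_isHermitian (hEherm α (hΔ hα)) ψ
  have hne' : ∃ α ∈ Δ, v α ≠ 0 := by
    by_contra! h
    exact hne (by rw [sum_mulVec]; exact Finset.sum_eq_zero h)
  rw [hstate, hnorm]
  change IsPureState (normalizedOuterSum Δ v) ↔ _
  rw [isPureState_normalizedOuterSum_iff horth hne']
  exact (exists_mulVec_eq_smul_iff_of_orthogonal hEorth hAdec hΔ ψ).symm

/-- With `A = ∑ α ∈ σA, α • E α` the spectral decomposition of the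
self-adjoint `A`, `ψ` a unit vector and `Δ ⊆ σA` with `E_Δ ψ ≠ 0`
(`E_Δ = ∑ α ∈ Δ, E α`), the updated state
`T_{(Δ,A)}(|ψ⟩⟨ψ|) = ⟨ψ, E_Δ ψ⟩⁻¹ • ∑ α ∈ Δ, E α |ψ⟩⟨ψ| E α`
is a rank-one projection (a pure state) iff `E_Δ ψ` is an eigenvector of `A`
whose eigenvalue lies in `Δ`. -/
theorem stmt18 {n : ℕ} (A : Matrix (Fin n) (Fin n) ℂ) (hA : A.IsHermitian)
    (σA : Finset ℝ) (E : ℝ → Matrix (Fin n) (Fin n) ℂ)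
    (hEherm : ∀ α ∈ σA, (E α).IsHermitian)
    (hEorth : ∀ α ∈ σA, ∀ α' ∈ σA, E α * E α' = if α = α' then E α else 0)
    (hEsum : ∑ α ∈ σA, E α = 1)
    (hAdec : A = ∑ α ∈ σA, (α : ℂ) • E α)
    (ψ : Fin n → ℂ) (hψ : star ψ ⬝ᵥ ψ = 1)
    (Δ : Finset ℝ) (hΔ : Δ ⊆ σA)
    (hne : (∑ α ∈ Δ, E α) *ᵥ ψ ≠ 0) :
    (((star ψ ⬝ᵥ ((∑ α ∈ Δ, E α) *ᵥ ψ))⁻¹ •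
        ∑ α ∈ Δ, E α * vecMulVec ψ (star ψ) * E α).IsHermitian ∧
     ((star ψ ⬝ᵥ ((∑ α ∈ Δ, E α) *ᵥ ψ))⁻¹ •
        ∑ α ∈ Δ, E α * vecMulVec ψ (star ψ) * E α) *
       ((star ψ ⬝ᵥ ((∑ α ∈ Δ, E α) *ᵥ ψ))⁻¹ •
        ∑ α ∈ Δ, E α * vecMulVec ψ (star ψ) * E α)
       = ((star ψ ⬝ᵥ ((∑ α ∈ Δ, E α) *ᵥ ψ))⁻¹ •
        ∑ α ∈ Δ, E α * vecMulVec ψ (star ψ) * E α) ∧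
     ((star ψ ⬝ᵥ ((∑ α ∈ Δ, E α) *ᵥ ψ))⁻¹ •
        ∑ α ∈ Δ, E α * vecMulVec ψ (star ψ) * E α).rank = 1)
    ↔ ∃ α ∈ Δ, A *ᵥ ((∑ α' ∈ Δ, E α') *ᵥ ψ) = (α : ℂ) • ((∑ α' ∈ Δ, E α') *ᵥ ψ) :=
  stmt18_general A σA E hEherm hEorth hAdec ψ Δ hΔ hne
end
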